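/- arXiv:2205.11353 — 2 statements merged into one kernel-verified Lean document; each statement's English description precedes it below -/
import Mathlib

section
/- The integral over all real t of t·φ(t)·Φ(t) dt equals 1/(2√π), where φ and Φ are the PDF and CDF of the standard normal distribution. -/
open MeasureTheory Real Filter

noncomputable def phi (t : ℝ) : ℝ := Real.exp (-t^2/2) / Real.sqrt (2*Real.pi)

noncomputable def Phi (x : ℝ) : ℝ := ∫ s in Set.Iic x, phi s

/-! Integrating by parts against `-φ`, whose derivative is `t φ(t)`, turns `∫ t φ Φ` into
`∫ φ² = (2π)⁻¹ ∫ e^{-t²} = √π / (2π)`; the boundary terms vanish because `Φ` is bounded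
and `φ` decays. -/

theorem hasDerivAt_integral_Iic {f : ℝ → ℝ} (hf : Continuous f) (hfi : Integrable f) (x : ℝ) :
    HasDerivAt (fun y => ∫ t in Set.Iic y, f t) (f x) x := by
  have hsplit : ∀ y, ∫ t in Set.Iic y, f t = (∫ t in Set.Iic 0, f t) + ∫ t in (0 : ℝ)..y, f t :=
    fun y => by
      rw [← intervalIntegral.integral_Iic_sub_Iic hfi.integrableOn hfi.integrableOn]
      ring
  exact ((intervalIntegral.integral_hasDerivAt_right (hf.intervalIntegrable _ _)
    (hf.stronglyMeasurableAtFilter _ _) hf.continuousAt).const_add _).congr_of_eventuallyEq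
    (Eventually.of_forall hsplit)

theorem phi_eq_exp (t : ℝ) : phi t = rexp (-(1 / 2) * t ^ 2) / √(2 * π) := by
  rw [phi]; ring_nf

theorem phi_mul_phi (t : ℝ) : phi t * phi t = rexp (-1 * t ^ 2) / (2 * π) := by
  rw [phi, div_mul_div_comm, ← Real.exp_add, Real.mul_self_sqrt (by positivity)]
  ring_nf

theorem phi_nonneg (t : ℝ) : 0 ≤ phi t := by
  unfold phi; positivity

theorem continuous_phi : Continuous phi := by
  unfold phi; fun_prop

theorem integrable_phi : Integrable phi := by
  refine ((integrable_exp_neg_mul_sq (by norm_num : (0 : ℝ) < 1 / 2)).div_const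
    (√(2 * π))).congr (Eventually.of_forall fun t => ?_)
  rw [phi_eq_exp]

theorem integrable_mul_phi : Integrable fun t => t * phi t := by
  refine ((integrable_mul_exp_neg_mul_sq (by norm_num : (0 : ℝ) < 1 / 2)).div_const
    (√(2 * π))).congr (Eventually.of_forall fun t => ?_)
  simp only [phi_eq_exp, mul_div_assoc]

theorem hasDerivAt_neg_phi (x : ℝ) : HasDerivAt (fun t => -phi t) (x * phi x) x := by
  have hexp : HasDerivAt (fun t : ℝ => -t ^ 2 / 2) (-x) x :=
    ((hasDerivAt_pow 2 x).neg.div_const 2).congr_deriv (by push_cast; ring)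
  have h : HasDerivAt (fun t => -phi t) (-(rexp (-x ^ 2 / 2) * -x / √(2 * π))) x :=
    (hexp.exp.div_const _).neg
  rwa [show -(rexp (-x ^ 2 / 2) * -x / √(2 * π)) = x * phi x by rw [phi]; ring] at h

theorem integrable_phi_mul_phi : Integrable fun t => phi t * phi t := by
  simpa only [phi_mul_phi] using
    (integrable_exp_neg_mul_sq (by norm_num : (0 : ℝ) < 1)).div_const (2 * π)

theorem integral_phi_mul_phi : ∫ t, phi t * phi t = 1 / (2 * √π) := by
  have hπ : √π * √π = π := Real.mul_self_sqrt pi_pos.le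
  have hπ' : 0 < √π := Real.sqrt_pos.mpr pi_pos
  simp_rw [phi_mul_phi]
  rw [integral_div, integral_gaussian, div_one]
  field_simp
  linarith

theorem hasDerivAt_Phi (x : ℝ) : HasDerivAt Phi (phi x) x :=
  hasDerivAt_integral_Iic continuous_phi integrable_phi x

theorem abs_Phi_le (x : ℝ) : |Phi x| ≤ ∫ t, phi t := by
  rw [Phi, abs_of_nonneg (setIntegral_nonneg measurableSet_Iic fun t _ => phi_nonneg t)]
  exact setIntegral_le_integral integrable_phi (Eventually.of_forall phi_nonneg)

/-- Stein's identity for the standard normal density. -/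
theorem integral_mul_phi_mul_eq_integral_phi_mul_deriv {g g' : ℝ → ℝ} {C : ℝ}
    (hg : ∀ x, HasDerivAt g (g' x) x) (hC : ∀ x, |g x| ≤ C)
    (hg' : Integrable fun x => phi x * g' x) :
    ∫ t, t * phi t * g t = ∫ t, phi t * g' t := by
  have hmeas : AEStronglyMeasurable g volume :=
    (continuous_iff_continuousAt.mpr fun x => (hg x).continuousAt).aestronglyMeasurable
  have hbound : ∀ᵐ x ∂volume, ‖g x‖ ≤ C := Eventually.of_forall hC
  have key := integral_mul_deriv_eq_deriv_mul_of_integrable (u := g) (v := fun t => -phi t)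
    (fun x _ => hg x) (fun x _ => hasDerivAt_neg_phi x)
    (integrable_mul_phi.bdd_mul hmeas hbound)
    (hg'.neg.congr (Eventually.of_forall fun t => by
      simp only [Pi.neg_apply, Pi.mul_apply, mul_neg, mul_comm]))
    (integrable_phi.neg.bdd_mul hmeas hbound)
  simp only [mul_neg, integral_neg, neg_neg] at key
  simpa only [mul_comm, mul_left_comm] using key

theorem stmt2 : ∫ t : ℝ, t * phi t * Phi t = 1 / (2 * Real.sqrt Real.pi) := by
  rw [integral_mul_phi_mul_eq_integral_phi_mul_deriv hasDerivAt_Phi abs_Phi_le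
    integrable_phi_mul_phi]
  exact integral_phi_mul_phi
end

section
/- Let D be a finite persistence diagram with total lifespan L_D = Σ_{(b,d)∈D}(d−b) and minimum lifespan δ_D = min_{(b,d)∈D}(d−b) > 0, and let σ > 0. Then ‖G_D‖₁ ≤ (1 + σ/(√π·δ_D))·L_D, where G_D(t) = Σ_{(b,d)∈D} Φ((t−b)/σ)·Φ((d−t)/σ). -/
/-! If `X` and `Y` are independent `N(0, σ²)` variables, then `Φ((t - b) / σ) Φ((d - t) / σ)` is the
probability that `b + X ≤ t ≤ d - Y`, so by Tonelli its integral over `t` is `E (d - b - (X + Y))⁺`.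
As `X + Y ∼ N(0, 2σ²)`, this is at most `(d - b) + E (X + Y)⁻ = (d - b) + σ / √π`, and
`σ / √π ≤ σ (d - b) / (√π δ)` because every lifespan is at least `δ`. -/

open MeasureTheory Real Filter

open ProbabilityTheory Set
open scoped ENNReal NNReal

lemma phi_eq_gaussianPDFReal : phi = gaussianPDFReal 0 1 := by
  ext x; simp [phi, gaussianPDFReal, div_eq_inv_mul]

lemma Phi_eq_cdf_gaussianReal : Phi = cdf (gaussianReal 0 1) := by
  ext x
  rw [cdf_eq_real, measureReal_def, gaussianReal_apply_eq_integral _ one_ne_zero,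
    ENNReal.toReal_ofReal
      (setIntegral_nonneg measurableSet_Iic fun _ _ ↦ gaussianPDFReal_nonneg _ _ _),
    Phi, phi_eq_gaussianPDFReal]

lemma Phi_nonneg (x : ℝ) : 0 ≤ Phi x := Phi_eq_cdf_gaussianReal ▸ cdf_nonneg _ x

@[fun_prop]
lemma measurable_Phi : Measurable Phi := Phi_eq_cdf_gaussianReal ▸ (monotone_cdf _).measurable

lemma ofReal_Phi_div {σ : ℝ} (hσ : 0 < σ) (x : ℝ) :
    ENNReal.ofReal (Phi (x / σ)) = gaussianReal 0 (.mk (σ ^ 2) (sq_nonneg σ)) (Iic x) := by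
  have h := gaussianReal_map_const_mul (μ := 0) (v := 1) σ
  rw [mul_zero, mul_one] at h
  rw [← h, Measure.map_apply (measurable_const_mul σ) measurableSet_Iic, Phi_eq_cdf_gaussianReal,
    ofReal_cdf]
  congr 1; ext y; simp [le_div_iff₀ hσ, mul_comm]

lemma lintegral_measure_Iic_mul_measure_Iic_eq_lintegral_conv (μ ν : Measure ℝ) [SFinite μ]
    [SFinite ν] (b d : ℝ) :
    ∫⁻ t, μ (Iic (t - b)) * ν (Iic (d - t)) = ∫⁻ z, ENNReal.ofReal (d - b - z) ∂(μ ∗ ν) := by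
  set S : Set (ℝ × ℝ × ℝ) := {q | q.2.1 ≤ q.1 - b ∧ q.2.2 ≤ d - q.1}
  have hS : MeasurableSet S := by
    simp only [S, ofPred_and]
    exact (measurableSet_le (by fun_prop) (by fun_prop)).inter
      (measurableSet_le (by fun_prop) (by fun_prop))
  rw [Measure.lintegral_conv_eq_lintegral_sum (by fun_prop)]
  calc ∫⁻ t, μ (Iic (t - b)) * ν (Iic (d - t))
      = (volume.prod (μ.prod ν)) S := by
        rw [Measure.prod_apply hS]
        refine lintegral_congr fun t ↦ ?_
        rw [← Measure.prod_prod]; rfl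
    _ = ∫⁻ p, ENNReal.ofReal (d - b - (p.1 + p.2)) ∂(μ.prod ν) := by
        rw [Measure.prod_apply_symm hS]
        refine lintegral_congr fun p ↦ ?_
        have : (fun t ↦ (t, p)) ⁻¹' S = Icc (b + p.1) (d - p.2) := by
          ext t; simp only [S, mem_preimage, mem_ofPred_eq, mem_Icc]
          constructor <;> rintro ⟨h₁, h₂⟩ <;> constructor <;> linarith
        rw [this, Real.volume_Icc]; ring_nf

lemma integral_Ioi_mul_exp_neg_mul_sq {b : ℝ} (hb : 0 < b) :
    ∫ x in Ioi (0 : ℝ), x * exp (-b * x ^ 2) = (2 * b)⁻¹ := by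
  have h := integral_rpow_mul_exp_neg_mul_rpow two_pos (by norm_num : (-1 : ℝ) < 1) hb
  norm_num [Real.rpow_neg_one] at h
  rw [show (2 * b)⁻¹ = b⁻¹ * (1 / 2) by ring, ← h]
  simp only [neg_mul]

lemma lintegral_ofReal_neg_gaussianReal (v : ℝ≥0) :
    ∫⁻ z, ENNReal.ofReal (-z) ∂(gaussianReal 0 v) = ENNReal.ofReal (√(v / (2 * π))) := by
  rcases eq_or_ne v 0 with rfl | hv
  · simp
  have hv' : (0 : ℝ) < v := by positivity
  rw [← neg_zero, ← gaussianReal_map_neg, lintegral_map (by fun_prop) measurable_neg]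
  simp only [neg_neg]
  rw [gaussianReal_of_var_ne_zero _ hv,
    lintegral_withDensity_eq_lintegral_mul _ (measurable_gaussianPDF _ _) (by fun_prop)]
  have hdens : ∀ z, gaussianPDFReal 0 v z * z
      = (√(2 * π * v))⁻¹ * (z * exp (-(2 * (v : ℝ))⁻¹ * z ^ 2)) := fun z ↦ by
    rw [gaussianPDFReal]; ring_nf
  calc ∫⁻ z, (gaussianPDF 0 v * fun z ↦ ENNReal.ofReal z) z
      = ∫⁻ z in Ioi 0, ENNReal.ofReal (gaussianPDFReal 0 v z * z) := by
        rw [setLIntegral_eq_of_support_subset]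
        · simp [gaussianPDF, ENNReal.ofReal_mul (gaussianPDFReal_nonneg _ _ _)]
        · exact fun z hz ↦ lt_of_not_ge fun h ↦ hz (ENNReal.ofReal_eq_zero.mpr
            (mul_nonpos_of_nonneg_of_nonpos (gaussianPDFReal_nonneg _ _ _) h))
    _ = ENNReal.ofReal (∫ z in Ioi 0, gaussianPDFReal 0 v z * z) := by
        rw [ofReal_integral_eq_lintegral_ofReal]
        · simp_rw [hdens]
          exact ((integrable_mul_exp_neg_mul_sq (by positivity)).const_mul _).integrableOn
        · exact (ae_restrict_iff' measurableSet_Ioi).mpr (ae_of_all _ fun z hz ↦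
            mul_nonneg (gaussianPDFReal_nonneg _ _ _) (le_of_lt hz))
    _ = _ := by
        simp_rw [hdens]
        rw [integral_const_mul, integral_Ioi_mul_exp_neg_mul_sq (by positivity)]
        congr 1
        rw [show (2 * (2 * (v : ℝ))⁻¹)⁻¹ = √v * √v by rw [Real.mul_self_sqrt hv'.le]; field_simp,
          Real.sqrt_mul (by positivity), Real.sqrt_div hv'.le]
        field_simp

lemma lintegral_ofReal_Phi_mul_Phi_le (b d : ℝ) {σ : ℝ} (hσ : 0 < σ) :
    ∫⁻ t, ENNReal.ofReal (Phi ((t - b) / σ) * Phi ((d - t) / σ))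
      ≤ ENNReal.ofReal (d - b) + ENNReal.ofReal (σ / √π) := by
  set v : ℝ≥0 := .mk (σ ^ 2) (sq_nonneg σ)
  have hvar : √((v + v : ℝ≥0) / (2 * π)) = σ / √π := by
    rw [show ((v + v : ℝ≥0) : ℝ) / (2 * π) = σ ^ 2 / π by simp [v]; field_simp; ring,
      Real.sqrt_div' _ pi_pos.le, Real.sqrt_sq hσ.le]
  calc ∫⁻ t, ENNReal.ofReal (Phi ((t - b) / σ) * Phi ((d - t) / σ))
      = ∫⁻ t, gaussianReal 0 v (Iic (t - b)) * gaussianReal 0 v (Iic (d - t)) := by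
        simp_rw [ENNReal.ofReal_mul (Phi_nonneg _), ofReal_Phi_div hσ]; rfl
    _ = ∫⁻ z, ENNReal.ofReal (d - b + -z) ∂(gaussianReal 0 (v + v)) := by
        rw [lintegral_measure_Iic_mul_measure_Iic_eq_lintegral_conv, gaussianReal_conv_gaussianReal,
          add_zero]
        simp_rw [sub_eq_add_neg]
    _ ≤ ∫⁻ z, ENNReal.ofReal (d - b) + ENNReal.ofReal (-z) ∂(gaussianReal 0 (v + v)) :=
        lintegral_mono fun z ↦ ENNReal.ofReal_add_le
    _ = ENNReal.ofReal (d - b) + ENNReal.ofReal (σ / √π) := by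
        rw [lintegral_add_left measurable_const, lintegral_const, measure_univ, mul_one,
          lintegral_ofReal_neg_gaussianReal, hvar]

lemma add_le_one_add_div_mul {a δ L : ℝ} (ha : 0 ≤ a) (hδ : 0 < δ) (hL : δ ≤ L) :
    L + a ≤ (1 + a / δ) * L := by
  have : a ≤ a / δ * L := by
    rw [div_mul_eq_mul_div, le_div_iff₀ hδ]; exact mul_le_mul_of_nonneg_left hL ha
  linarith

lemma lintegral_multiset_sum_map {α ι : Type*} [MeasurableSpace α] {μ : Measure α}
    (D : Multiset ι) {f : ι → α → ℝ≥0∞} (hf : ∀ i, Measurable (f i)) :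
    ∫⁻ a, (D.map (f · a)).sum ∂μ = (D.map fun i ↦ ∫⁻ a, f i a ∂μ).sum := by
  induction D using Multiset.induction_on with
  | empty => simp
  | cons i D ih =>
    simp only [Multiset.map_cons, Multiset.sum_cons]
    rw [lintegral_add_left (hf i), ih]

lemma ENNReal.ofReal_multiset_sum_map {ι : Type*} (D : Multiset ι) {g : ι → ℝ}
    (hg : ∀ i ∈ D, 0 ≤ g i) :
    ENNReal.ofReal (D.map g).sum = (D.map fun i ↦ ENNReal.ofReal (g i)).sum := by
  induction D using Multiset.induction_on with
  | empty => simp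
  | cons i D ih =>
    simp only [Multiset.map_cons, Multiset.sum_cons]
    have hD : ∀ j ∈ D, 0 ≤ g j := fun j hj ↦ hg j (Multiset.mem_cons_of_mem hj)
    rw [ENNReal.ofReal_add (hg i (Multiset.mem_cons_self i D))
      (Multiset.sum_nonneg (Multiset.forall_mem_map_iff.mpr hD)), ih hD]

theorem stmt11_general (D : Multiset (ℝ × ℝ)) (σ δ : ℝ)
    (hσ : 0 < σ) (hδ : 0 < δ)
    (hmin : ∀ p ∈ D, δ ≤ p.2 - p.1) :
    ∫ t : ℝ, |(D.map (fun p => Phi ((t - p.1) / σ) * Phi ((p.2 - t) / σ))).sum| ≤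
      (1 + σ / (Real.sqrt Real.pi * δ)) * (D.map (fun p => p.2 - p.1)).sum := by
  set f : ℝ × ℝ → ℝ → ℝ := fun p t ↦ Phi ((t - p.1) / σ) * Phi ((p.2 - t) / σ)
  have hf : ∀ p t, 0 ≤ f p t := fun p t ↦ mul_nonneg (Phi_nonneg _) (Phi_nonneg _)
  have hL : ∀ p ∈ D, 0 ≤ (1 + σ / (√π * δ)) * (p.2 - p.1) :=
    fun p hp ↦ mul_nonneg (by positivity) (hδ.le.trans (hmin p hp))
  have hterm : ∀ p ∈ D, ∫⁻ t, ENNReal.ofReal (f p t)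
      ≤ ENNReal.ofReal ((1 + σ / (√π * δ)) * (p.2 - p.1)) :=
    fun p hp ↦ (lintegral_ofReal_Phi_mul_Phi_le p.1 p.2 hσ).trans <| by
      rw [← ENNReal.ofReal_add (hδ.le.trans (hmin p hp)) (by positivity), ← div_div]
      exact ENNReal.ofReal_le_ofReal (add_le_one_add_div_mul (by positivity) hδ (hmin p hp))
  calc ∫ t, |(D.map (f · t)).sum|
      ≤ (∫⁻ t, ENNReal.ofReal ‖|(D.map (f · t)).sum|‖).toReal :=
        (le_norm_self _).trans (norm_integral_le_lintegral_norm _)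
    _ = ((D.map fun p ↦ ∫⁻ t, ENNReal.ofReal (f p t)).sum).toReal := by
        simp_rw [Real.norm_eq_abs, abs_abs,
          abs_of_nonneg (Multiset.sum_nonneg (Multiset.forall_mem_map_iff.mpr fun p _ ↦ hf p _)),
          ENNReal.ofReal_multiset_sum_map D fun p _ ↦ hf p _]
        rw [lintegral_multiset_sum_map D fun p ↦ ?_]
        fun_prop
    _ ≤ (1 + σ / (√π * δ)) * (D.map (fun p => p.2 - p.1)).sum := by
        refine ENNReal.toReal_le_of_le_ofReal ?_ ?_
        · rw [← Multiset.sum_map_mul_left]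
          exact Multiset.sum_nonneg (Multiset.forall_mem_map_iff.mpr hL)
        · rw [← Multiset.sum_map_mul_left, ENNReal.ofReal_multiset_sum_map D hL]
          exact Multiset.sum_map_le_sum_map _ _ hterm

theorem stmt11 (D : Multiset (ℝ × ℝ)) (hD : ∀ p ∈ D, p.1 < p.2) (σ δ : ℝ)
    (hσ : 0 < σ) (hδ : 0 < δ)
    (hmin : ∀ p ∈ D, δ ≤ p.2 - p.1) (hmem : δ ∈ D.map (fun p => p.2 - p.1)) :
    ∫ t : ℝ, |(D.map (fun p => Phi ((t - p.1) / σ) * Phi ((p.2 - t) / σ))).sum| ≤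
      (1 + σ / (Real.sqrt Real.pi * δ)) * (D.map (fun p => p.2 - p.1)).sum :=
  stmt11_general D σ δ hσ hδ hmin
end
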